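/- Let G₁, G₂ be connected graphs with diameters d₁, d₂ ≥ 1 and exponents γ₁, γ₂, and suppose G₁ contains an odd cycle. Then the diameter of G₁ ⊗ G₂ equals γ₁ if γ₁ = γ₂; equals max{γ₂ + 1, d₁} if γ₁ > γ₂; and equals max{γ₁ + 1, d₂} if γ₁ < γ₂. -/

import Mathlib

/-- Existence of a walk of length `k` from `x` to `y` in the graph with adjacency
relation `adj` (loops allowed, no parallel edges). -/
def GWalk {V : Type*} (adj : V → V → Prop) : ℕ → V → V → Prop
  | 0, x, y => x = y
  | k + 1, x, y => ∃ z, adj x z ∧ GWalk adj k z y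

/-- Distance: the length of a shortest walk (= shortest path) from `x` to `y`. -/
noncomputable def GDist {V : Type*} (adj : V → V → Prop) (x y : V) : ℕ :=
  sInf {k | GWalk adj k x y}

/-- The graph is connected: any two vertices are joined by some walk. -/
def GConnected {V : Type*} (adj : V → V → Prop) : Prop :=
  ∀ x y, ∃ k, GWalk adj k x y

/-- The graph contains a closed walk of odd length (an "odd cycle"). -/
def HasOddClosedWalk {V : Type*} (adj : V → V → Prop) : Prop :=
  ∃ (x : V) (k : ℕ), Odd k ∧ GWalk adj k x x

/-- The graph is primitive: some `γ` works as an exponent. -/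
def GPrimitive {V : Type*} (adj : V → V → Prop) : Prop :=
  ∃ γ : ℕ, ∀ x y : V, ∀ k ≥ γ, GWalk adj k x y

/-- Adjacency of the Kronecker (tensor) product. -/
def KronAdj {V₁ V₂ : Type*} (adj₁ : V₁ → V₁ → Prop) (adj₂ : V₂ → V₂ → Prop) :
    V₁ × V₂ → V₁ × V₂ → Prop :=
  fun a b => adj₁ a.1 b.1 ∧ adj₂ a.2 b.2

/-- The exponent of a graph, as an extended natural number (`⊤` if not primitive). -/
noncomputable def GExp {V : Type*} (adj : V → V → Prop) : ℕ∞ :=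
  sInf {n : ℕ∞ | ∃ γ : ℕ, n = γ ∧ ∀ x y : V, ∀ k ≥ γ, GWalk adj k x y}

section Aux

variable {V : Type*} {adj : V → V → Prop}

lemma gwalk_zero {x y : V} : GWalk adj 0 x y ↔ x = y := Iff.rfl

lemma gwalk_succ {k : ℕ} {x y : V} :
    GWalk adj (k + 1) x y ↔ ∃ z, adj x z ∧ GWalk adj k z y := Iff.rfl

lemma gwalk_one {x y : V} : GWalk adj 1 x y ↔ adj x y := by
  rw [gwalk_succ]
  constructor
  · rintro ⟨z, hz, hw⟩; rw [gwalk_zero] at hw; exact hw ▸ hz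
  · intro h; exact ⟨y, h, rfl⟩

lemma gwalk_append : ∀ {k : ℕ} {l : ℕ} {x y z : V},
    GWalk adj k x y → GWalk adj l y z → GWalk adj (k + l) x z := by
  intro k
  induction k with
  | zero =>
    intro l x y z h h'
    rw [gwalk_zero] at h
    rw [Nat.zero_add]
    exact h ▸ h'
  | succ n ih =>
    intro l x y z h h'
    obtain ⟨w, hw, hwalk⟩ := h
    rw [Nat.succ_add]
    exact ⟨w, hw, ih hwalk h'⟩

lemma gwalk_symm (hs : Symmetric adj) : ∀ {k : ℕ} {x y : V},
    GWalk adj k x y → GWalk adj k y x := by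
  intro k
  induction k with
  | zero => intro x y h; exact (gwalk_zero.1 h).symm
  | succ n ih =>
    intro x y h
    obtain ⟨z, hxz, hw⟩ := h
    exact gwalk_append (ih hw) (gwalk_one.2 (hs hxz))

lemma gwalk_add_two (hs : Symmetric adj) (hnb : ∀ v : V, ∃ w, adj v w)
    {k : ℕ} {x y : V} (h : GWalk adj k x y) : GWalk adj (k + 2) x y := by
  obtain ⟨w, hw⟩ := hnb x
  have h2 : GWalk adj 2 x x := ⟨w, hw, gwalk_one.2 (hs hw)⟩
  rw [show k + 2 = 2 + k by omega]
  exact gwalk_append h2 h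

lemma gwalk_pad (hs : Symmetric adj) (hnb : ∀ v : V, ∃ w, adj v w)
    {k n : ℕ} {x y : V} (h : GWalk adj k x y) (hkn : k ≤ n) (hpar : k % 2 = n % 2) :
    GWalk adj n x y := by
  obtain ⟨t, rfl⟩ : ∃ t, n = k + 2 * t := ⟨(n - k) / 2, by omega⟩
  clear hkn hpar
  induction t with
  | zero => simpa using h
  | succ m ih =>
    rw [show k + 2 * (m + 1) = (k + 2 * m) + 2 by ring]
    exact gwalk_add_two hs hnb ih

lemma gdist_le {x y : V} {k : ℕ} (h : GWalk adj k x y) : GDist adj x y ≤ k :=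
  Nat.sInf_le h

lemma gwalk_gdist {x y : V} (h : ∃ k, GWalk adj k x y) :
    GWalk adj (GDist adj x y) x y :=
  Nat.sInf_mem h

/-- The exponent property for a concrete natural number. -/
def ExpP {V : Type*} (adj : V → V → Prop) (γ : ℕ) : Prop :=
  ∀ x y : V, ∀ k ≥ γ, GWalk adj k x y

lemma gexp_eq (h : ∃ γ, ExpP adj γ) :
    GExp adj = ((sInf {γ | ExpP adj γ} : ℕ) : ℕ∞) := by
  apply le_antisymm
  · exact sInf_le ⟨sInf {γ | ExpP adj γ}, rfl, Nat.sInf_mem h⟩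
  · apply le_sInf
    rintro n ⟨γ, rfl, hγ⟩
    exact_mod_cast Nat.sInf_le (show γ ∈ {γ | ExpP adj γ} from hγ)

lemma gexp_spec {γ : ℕ} (h : GExp adj = (γ : ℕ∞)) :
    ExpP adj γ ∧ ∀ m < γ, ¬ ExpP adj m := by
  have hne : ∃ γ₀, ExpP adj γ₀ := by
    by_contra hno
    push_neg at hno
    have htop : GExp adj = ⊤ := by
      unfold GExp
      convert (show sInf (∅ : Set ℕ∞) = ⊤ from sInf_empty)
      ext n
      simp only [Set.mem_setOf_eq, Set.mem_empty_iff_false, iff_false]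
      rintro ⟨γ', rfl, hγ'⟩
      exact hno γ' hγ'
    rw [htop] at h
    exact absurd h.symm (by simp)
  have heq := gexp_eq (adj := adj) hne
  rw [h] at heq
  have hγ : γ = sInf {γ | ExpP adj γ} := by exact_mod_cast heq
  constructor
  · exact hγ ▸ Nat.sInf_mem hne
  · intro m hm hPm
    have := Nat.sInf_le (show m ∈ {γ | ExpP adj γ} from hPm)
    omega

lemma exp_witness {γ : ℕ} (hγ : 1 ≤ γ) (hP : ExpP adj γ) (hmin : ¬ ExpP adj (γ - 1)) :
    ∃ a b : V, ¬ GWalk adj (γ - 1) a b := by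
  unfold ExpP at hmin
  push_neg at hmin
  obtain ⟨a, b, k, hk, hw⟩ := hmin
  refine ⟨a, b, fun hwalk => ?_⟩
  have hkek : k = γ - 1 := by
    by_contra hne
    exact hw (hP a b k (by omega))
  exact hw (hkek ▸ hwalk)

lemma primitive_of_odd (hs : Symmetric adj) (hnb : ∀ v : V, ∃ w, adj v w)
    (hc : GConnected adj) (d : ℕ) (hd : ∀ x y : V, GDist adj x y ≤ d)
    (hodd : HasOddClosedWalk adj) : ∃ γ, ExpP adj γ := by
  obtain ⟨w, m, hm, hwm⟩ := hodd
  obtain ⟨j, rfl⟩ := hm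
  refine ⟨2 * d + (2 * j + 1), fun x y k hk => ?_⟩
  have hxw := gwalk_gdist (hc x w)
  have hwy := gwalk_gdist (hc w y)
  have ha : GDist adj x w ≤ d := hd x w
  have hb : GDist adj w y ≤ d := hd w y
  by_cases hp : (GDist adj x w + GDist adj w y) % 2 = k % 2
  · exact gwalk_pad hs hnb (gwalk_append hxw hwy) (by omega) hp
  · have hwalk : GWalk adj (GDist adj x w + ((2 * j + 1) + GDist adj w y)) x y :=
      gwalk_append hxw (gwalk_append hwm hwy)
    exact gwalk_pad hs hnb hwalk (by omega) (by omega)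

lemma block (hs : Symmetric adj) (hnb : ∀ v : V, ∃ w, adj v w)
    {n : ℕ} {a b : V} (h : ¬ GWalk adj n a b) (p : ℕ) :
    ∃ x y : V, ∀ k, k ≤ n → k % 2 = p % 2 → ¬ GWalk adj k x y := by
  by_cases hp : p % 2 = n % 2
  · exact ⟨a, b, fun k hk hkp hw => h (gwalk_pad hs hnb hw hk (by omega))⟩
  · obtain ⟨b', hb'⟩ := hnb b
    refine ⟨a, b', fun k hk hkp hw => ?_⟩
    have h1 : GWalk adj (k + 1) a b := gwalk_append hw (gwalk_one.2 (hs hb'))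
    have hkn : k < n := lt_of_le_of_ne hk (by omega)
    exact h (gwalk_pad hs hnb h1 (by omega) (by omega))

lemma gdist_eq' {x y : V} {M : ℕ} (hex : ∃ k, k ≤ M ∧ GWalk adj k x y)
    (hlb : ∀ k, GWalk adj k x y → M ≤ k) : GDist adj x y = M := by
  obtain ⟨k, hk, hw⟩ := hex
  have h1 : GDist adj x y ≤ k := gdist_le hw
  have h2 : M ≤ GDist adj x y := hlb _ (gwalk_gdist ⟨k, hw⟩)
  omega

lemma isGreatest_dist_eq {V : Type*} {adj : V → V → Prop} {D M : ℕ}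
    (hD : IsGreatest {m : ℕ | ∃ x y : V, m = GDist adj x y} D)
    (hub : ∀ x y : V, GDist adj x y ≤ M)
    (hex : ∃ x y : V, GDist adj x y = M) : D = M := by
  obtain ⟨x, y, hxy⟩ := hex
  obtain ⟨p, q, hpq⟩ := hD.1
  have h1 : D ≤ M := by rw [hpq]; exact hub p q
  have h2 : M ≤ D := hD.2 ⟨x, y, hxy.symm⟩
  omega

lemma kron_gwalk {V₁ V₂ : Type*} {adj₁ : V₁ → V₁ → Prop} {adj₂ : V₂ → V₂ → Prop} :
    ∀ {k : ℕ} {a b : V₁ × V₂},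
    GWalk (KronAdj adj₁ adj₂) k a b ↔ (GWalk adj₁ k a.1 b.1 ∧ GWalk adj₂ k a.2 b.2) := by
  intro k
  induction k with
  | zero =>
    intro a b
    simp only [gwalk_zero, Prod.ext_iff]
  | succ n ih =>
    intro a b
    constructor
    · rintro ⟨z, hz, hw⟩
      exact ⟨⟨z.1, hz.1, (ih.1 hw).1⟩, ⟨z.2, hz.2, (ih.1 hw).2⟩⟩
    · rintro ⟨⟨z1, h1, w1⟩, ⟨z2, h2, w2⟩⟩
      exact ⟨(z1, z2), ⟨h1, h2⟩, ih.2 ⟨w1, w2⟩⟩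

lemma enat_cast_max (a b : ℕ) : ((max a b : ℕ) : ℕ∞) = max (a : ℕ∞) (b : ℕ∞) := by
  rcases le_total a b with h | h
  · rw [max_eq_right h, max_eq_right (by exact_mod_cast h : (a : ℕ∞) ≤ (b : ℕ∞))]
  · rw [max_eq_left h, max_eq_left (by exact_mod_cast h : (b : ℕ∞) ≤ (a : ℕ∞))]

lemma enat_cast_max_succ (a b : ℕ) :
    ((max (a + 1) b : ℕ) : ℕ∞) = max ((a : ℕ∞) + 1) (b : ℕ∞) := by
  rw [enat_cast_max]
  norm_cast

end Aux

theorem stmt17 {V₁ V₂ : Type*} (adj₁ : V₁ → V₁ → Prop) (adj₂ : V₂ → V₂ → Prop)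
    (hsymm₁ : Symmetric adj₁) (hsymm₂ : Symmetric adj₂)
    (hc₁ : GConnected adj₁) (hc₂ : GConnected adj₂)
    (hodd₁ : HasOddClosedWalk adj₁) (g₁ g₂ : ℕ∞) (d₁ d₂ D : ℕ)
    (hg₁ : GExp adj₁ = g₁) (hg₂ : GExp adj₂ = g₂)
    (hd₁ : IsGreatest {m : ℕ | ∃ x y : V₁, m = GDist adj₁ x y} d₁) (h1 : 1 ≤ d₁)
    (hd₂ : IsGreatest {m : ℕ | ∃ x y : V₂, m = GDist adj₂ x y} d₂) (h2 : 1 ≤ d₂)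
    (hD : IsGreatest {m : ℕ | ∃ x y : V₁ × V₂, m = GDist (KronAdj adj₁ adj₂) x y} D) :
    (g₁ = g₂ → (D : ℕ∞) = g₁) ∧
    (g₂ < g₁ → (D : ℕ∞) = max (g₂ + 1) (d₁ : ℕ∞)) ∧
    (g₁ < g₂ → (D : ℕ∞) = max (g₁ + 1) (d₂ : ℕ∞)) := by
  classical
  obtain ⟨⟨ax, ay, hax⟩, hub₁⟩ := hd₁
  obtain ⟨⟨bx, by2, hbx⟩, hub₂⟩ := hd₂
  have hdle₁ : ∀ x y, GDist adj₁ x y ≤ d₁ := fun x y => hub₁ ⟨x, y, rfl⟩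
  have hdle₂ : ∀ x y, GDist adj₂ x y ≤ d₂ := fun x y => hub₂ ⟨x, y, rfl⟩
  have hne₁ : ax ≠ ay := by
    rintro rfl
    have h0 : GDist adj₁ ax ax ≤ 0 := gdist_le (gwalk_zero.2 rfl)
    omega
  have hne₂ : bx ≠ by2 := by
    rintro rfl
    have h0 : GDist adj₂ bx bx ≤ 0 := gdist_le (gwalk_zero.2 rfl)
    omega
  have hnb₁ : ∀ v : V₁, ∃ w, adj₁ v w := by
    intro v
    obtain ⟨k, hk⟩ := hc₁ v ax
    obtain ⟨l, hl⟩ := hc₁ v ay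
    cases k with
    | zero =>
      cases l with
      | zero => exact absurd ((gwalk_zero.1 hk).symm.trans (gwalk_zero.1 hl)) hne₁
      | succ l => obtain ⟨w, hw, _⟩ := hl; exact ⟨w, hw⟩
    | succ k => obtain ⟨w, hw, _⟩ := hk; exact ⟨w, hw⟩
  have hnb₂ : ∀ v : V₂, ∃ w, adj₂ v w := by
    intro v
    obtain ⟨k, hk⟩ := hc₂ v bx
    obtain ⟨l, hl⟩ := hc₂ v by2
    cases k with
    | zero =>
      cases l with
      | zero => exact absurd ((gwalk_zero.1 hk).symm.trans (gwalk_zero.1 hl)) hne₂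
      | succ l => obtain ⟨w, hw, _⟩ := hl; exact ⟨w, hw⟩
    | succ k => obtain ⟨w, hw, _⟩ := hk; exact ⟨w, hw⟩
  have hprim : ∃ γ, ExpP adj₁ γ := primitive_of_odd hsymm₁ hnb₁ hc₁ d₁ hdle₁ hodd₁
  set γ₁ := sInf {γ | ExpP adj₁ γ} with hγ₁def
  have hg1eq : g₁ = (γ₁ : ℕ∞) := by rw [← hg₁]; exact gexp_eq hprim
  obtain ⟨hP₁, hmin₁⟩ := gexp_spec (hg₁.trans hg1eq)
  have hpos₁ : 1 ≤ γ₁ := by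
    by_contra h0
    exact hne₁ (gwalk_zero.1 (hP₁ ax ay 0 (by omega)))
  obtain ⟨a₁, b₁, hw₁⟩ := exp_witness hpos₁ hP₁ (hmin₁ _ (by omega))
  refine ⟨?_, ?_, ?_⟩
  · -- Case g₁ = g₂
    intro hgg
    have hE2 : GExp adj₂ = (γ₁ : ℕ∞) := by rw [hg₂, ← hgg, hg1eq]
    obtain ⟨hP₂, hmin₂⟩ := gexp_spec hE2
    obtain ⟨a₂, b₂, hw₂⟩ := exp_witness hpos₁ hP₂ (hmin₂ _ (by omega))
    obtain ⟨x1, y1, hB1⟩ := block hsymm₁ hnb₁ hw₁ (γ₁ + 1)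
    obtain ⟨x2, y2, hB2⟩ := block hsymm₂ hnb₂ hw₂ γ₁
    have hubd : ∀ p q : V₁ × V₂, GDist (KronAdj adj₁ adj₂) p q ≤ γ₁ := fun p q =>
      gdist_le (kron_gwalk.2 ⟨hP₁ _ _ _ le_rfl, hP₂ _ _ _ le_rfl⟩)
    have hdist : GDist (KronAdj adj₁ adj₂) (x1, x2) (y1, y2) = γ₁ := by
      apply gdist_eq'
      · exact ⟨γ₁, le_rfl, kron_gwalk.2 ⟨hP₁ _ _ _ le_rfl, hP₂ _ _ _ le_rfl⟩⟩
      · intro k hk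
        rw [kron_gwalk] at hk
        by_contra hlt
        push_neg at hlt
        by_cases hp : k % 2 = γ₁ % 2
        · exact hB2 k (by omega) (by omega) hk.2
        · exact hB1 k (by omega) (by omega) hk.1
    have hDeq : D = γ₁ := isGreatest_dist_eq hD hubd ⟨_, _, hdist⟩
    rw [hDeq, hg1eq]
  · -- Case g₂ < g₁
    intro hlt
    rw [hg1eq] at hlt
    lift g₂ to ℕ using ne_top_of_lt hlt with γ₂ hγ₂
    have hlt' : γ₂ < γ₁ := by exact_mod_cast hlt
    obtain ⟨hP₂, hmin₂⟩ := gexp_spec hg₂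
    have hpos₂ : 1 ≤ γ₂ := by
      by_contra h0
      exact hne₂ (gwalk_zero.1 (hP₂ bx by2 0 (by omega)))
    obtain ⟨a₂, b₂, hw₂⟩ := exp_witness hpos₂ hP₂ (hmin₂ _ (by omega))
    have hub : ∀ p q : V₁ × V₂, ∃ k, k ≤ max (γ₂ + 1) d₁ ∧ GWalk (KronAdj adj₁ adj₂) k p q := by
      rintro ⟨x, u⟩ ⟨y, v⟩
      have hmw : GWalk adj₁ (GDist adj₁ x y) x y := gwalk_gdist (hc₁ x y)
      have hmd : GDist adj₁ x y ≤ d₁ := hdle₁ x y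
      by_cases hcase : γ₂ ≤ GDist adj₁ x y
      · exact ⟨GDist adj₁ x y, le_max_of_le_right hmd, kron_gwalk.2 ⟨hmw, hP₂ u v _ hcase⟩⟩
      · by_cases hpar : GDist adj₁ x y % 2 = γ₂ % 2
        · exact ⟨γ₂, le_max_of_le_left (by omega), kron_gwalk.2
            ⟨gwalk_pad hsymm₁ hnb₁ hmw (by omega) hpar, hP₂ u v γ₂ le_rfl⟩⟩
        · exact ⟨γ₂ + 1, le_max_of_le_left le_rfl, kron_gwalk.2
            ⟨gwalk_pad hsymm₁ hnb₁ hmw (by omega) (by omega), hP₂ u v (γ₂ + 1) (by omega)⟩⟩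
    have hubd : ∀ p q : V₁ × V₂, GDist (KronAdj adj₁ adj₂) p q ≤ max (γ₂ + 1) d₁ := by
      intro p q
      obtain ⟨k, hk, hw⟩ := hub p q
      exact (gdist_le hw).trans hk
    have hex : ∃ p q : V₁ × V₂, GDist (KronAdj adj₁ adj₂) p q = max (γ₂ + 1) d₁ := by
      by_cases hcase : d₁ ≤ γ₂ + 1
      · obtain ⟨x1, y1, hB1⟩ := block hsymm₁ hnb₁ hw₁ γ₂
        obtain ⟨x2, y2, hB2⟩ := block hsymm₂ hnb₂ hw₂ (γ₂ + 1)
        refine ⟨(x1, x2), (y1, y2), ?_⟩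
        rw [max_eq_left hcase]
        apply gdist_eq'
        · obtain ⟨k, hk, hw⟩ := hub (x1, x2) (y1, y2)
          rw [max_eq_left hcase] at hk
          exact ⟨k, hk, hw⟩
        · intro k hk
          rw [kron_gwalk] at hk
          by_contra hlt2
          push_neg at hlt2
          by_cases hp : k % 2 = γ₂ % 2
          · exact hB1 k (by omega) (by omega) hk.1
          · exact hB2 k (by omega) (by omega) hk.2
      · push_neg at hcase
        refine ⟨(ax, bx), (ay, bx), ?_⟩
        rw [max_eq_right (by omega)]
        apply gdist_eq'
        · obtain ⟨k, hk, hw⟩ := hub (ax, bx) (ay, bx)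
          rw [max_eq_right (by omega : γ₂ + 1 ≤ d₁)] at hk
          exact ⟨k, hk, hw⟩
        · intro k hk
          rw [kron_gwalk] at hk
          have hdd := gdist_le (show GWalk adj₁ k ax ay from hk.1)
          omega
    have hDeq : D = max (γ₂ + 1) d₁ := isGreatest_dist_eq hD hubd hex
    rw [hDeq]
    exact enat_cast_max_succ γ₂ d₁
  · -- Case g₁ < g₂
    intro hlt
    rw [hg1eq] at hlt
    have hnE2 : ¬ ExpP adj₂ γ₁ := by
      intro hP
      have hle : GExp adj₂ ≤ (γ₁ : ℕ∞) := by
        rw [gexp_eq ⟨γ₁, hP⟩]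
        exact_mod_cast Nat.sInf_le (show γ₁ ∈ {γ | ExpP adj₂ γ} from hP)
      rw [hg₂] at hle
      exact absurd (lt_of_lt_of_le hlt hle) (lt_irrefl _)
    unfold ExpP at hnE2
    push_neg at hnE2
    obtain ⟨a₂, b₂, n, hn, hw₂⟩ := hnE2
    have hub : ∀ p q : V₁ × V₂, ∃ k, k ≤ max (γ₁ + 1) d₂ ∧ GWalk (KronAdj adj₁ adj₂) k p q := by
      rintro ⟨x, u⟩ ⟨y, v⟩
      have hmw : GWalk adj₂ (GDist adj₂ u v) u v := gwalk_gdist (hc₂ u v)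
      have hmd : GDist adj₂ u v ≤ d₂ := hdle₂ u v
      by_cases hcase : γ₁ ≤ GDist adj₂ u v
      · exact ⟨GDist adj₂ u v, le_max_of_le_right hmd, kron_gwalk.2 ⟨hP₁ x y _ hcase, hmw⟩⟩
      · by_cases hpar : GDist adj₂ u v % 2 = γ₁ % 2
        · exact ⟨γ₁, le_max_of_le_left (by omega), kron_gwalk.2
            ⟨hP₁ x y γ₁ le_rfl, gwalk_pad hsymm₂ hnb₂ hmw (by omega) hpar⟩⟩
        · exact ⟨γ₁ + 1, le_max_of_le_left le_rfl, kron_gwalk.2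
            ⟨hP₁ x y (γ₁ + 1) (by omega), gwalk_pad hsymm₂ hnb₂ hmw (by omega) (by omega)⟩⟩
    have hubd : ∀ p q : V₁ × V₂, GDist (KronAdj adj₁ adj₂) p q ≤ max (γ₁ + 1) d₂ := by
      intro p q
      obtain ⟨k, hk, hw⟩ := hub p q
      exact (gdist_le hw).trans hk
    have hex : ∃ p q : V₁ × V₂, GDist (KronAdj adj₁ adj₂) p q = max (γ₁ + 1) d₂ := by
      by_cases hcase : d₂ ≤ γ₁ + 1
      · obtain ⟨x1, y1, hB1⟩ := block hsymm₁ hnb₁ hw₁ (γ₁ + 1)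
        obtain ⟨x2, y2, hB2⟩ := block hsymm₂ hnb₂ hw₂ γ₁
        refine ⟨(x1, x2), (y1, y2), ?_⟩
        rw [max_eq_left hcase]
        apply gdist_eq'
        · obtain ⟨k, hk, hw⟩ := hub (x1, x2) (y1, y2)
          rw [max_eq_left hcase] at hk
          exact ⟨k, hk, hw⟩
        · intro k hk
          rw [kron_gwalk] at hk
          by_contra hlt2
          push_neg at hlt2
          by_cases hp : k % 2 = γ₁ % 2
          · exact hB2 k (by omega) (by omega) hk.2
          · exact hB1 k (by omega) (by omega) hk.1
      · push_neg at hcase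
        refine ⟨(ax, bx), (ax, by2), ?_⟩
        rw [max_eq_right (by omega)]
        apply gdist_eq'
        · obtain ⟨k, hk, hw⟩ := hub (ax, bx) (ax, by2)
          rw [max_eq_right (by omega : γ₁ + 1 ≤ d₂)] at hk
          exact ⟨k, hk, hw⟩
        · intro k hk
          rw [kron_gwalk] at hk
          have hdd := gdist_le (show GWalk adj₂ k bx by2 from hk.2)
          omega
    have hDeq : D = max (γ₁ + 1) d₂ := isGreatest_dist_eq hD hubd hex
    rw [hDeq, hg1eq]
    exact enat_cast_max_succ γ₁ d₂
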